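/- arXiv:1805.11580 — 5 statements merged into one kernel-verified Lean document; each statement's English description precedes it below -/
import Mathlib

section
/- Under the hypotheses of the previous setting, the block matrix identity [0, -X] · ([[zd_0, -c_0 X],[Y, zD_A - A]])^{-1} · [I; 0] = (z d_0 a(z) + c_0)^{-1} holds, provided z d_0 a(z) + c_0 is invertible. -/
/-!
With `D = z • DA - A` invertible, the Schur complement of `D` in the linearization is
`z d₀ + c₀ X D⁻¹ Y = z d₀ + c₀ a⁻¹ = e₁ a⁻¹`, where `e₁ = z d₀ a + c₀`. Hence the first block
column of the inverse of the linearization is `(a e₁⁻¹, -D⁻¹ Y a e₁⁻¹)`, and applying `[0, -X]`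
to it gives `X D⁻¹ Y a e₁⁻¹ = a⁻¹ a e₁⁻¹ = e₁⁻¹`.
-/

open Matrix

namespace Matrix

variable {m n α : Type*} [Fintype m] [Fintype n] [DecidableEq m] [DecidableEq n] [CommRing α]

theorem isUnit_det_fromBlocks₂₂ {A : Matrix m m α} {B : Matrix m n α} {C : Matrix n m α}
    {D : Matrix n n α} (hD : IsUnit D.det) (hS : IsUnit (A - B * D⁻¹ * C).det) :
    IsUnit (fromBlocks A B C D).det := by
  let := D.invertibleOfIsUnitDet hD
  rw [det_fromBlocks₂₂, invOf_eq_nonsing_inv]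
  exact hD.mul hS

theorem inv_fromBlocks₂₂_mul_fromRows_one_zero (A : Matrix m m α) (B : Matrix m n α)
    (C : Matrix n m α) (D : Matrix n n α) (hD : IsUnit D.det)
    (hS : IsUnit (A - B * D⁻¹ * C).det) :
    (fromBlocks A B C D)⁻¹ * fromRows (1 : Matrix m m α) (0 : Matrix n m α) =
      fromRows (A - B * D⁻¹ * C)⁻¹ (-(D⁻¹ * C * (A - B * D⁻¹ * C)⁻¹)) := by
  set S := A - B * D⁻¹ * C
  have hcol : fromBlocks A B C D * fromRows S⁻¹ (-(D⁻¹ * C * S⁻¹)) =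
      fromRows (1 : Matrix m m α) (0 : Matrix n m α) := by
    rw [fromBlocks_mul_fromRows, Matrix.mul_neg, Matrix.mul_neg, ← sub_eq_add_neg,
      ← sub_eq_add_neg, ← Matrix.mul_assoc, ← Matrix.mul_assoc, ← Matrix.mul_assoc,
      mul_nonsing_inv_cancel_left _ _ hD, sub_self, ← Matrix.sub_mul, mul_nonsing_inv _ hS]
  rw [← hcol, nonsing_inv_mul_cancel_left _ _ (isUnit_det_fromBlocks₂₂ hD hS)]

end Matrix

theorem resolvent_linearization_e1
    {K : Type*} [Field K] {r n : ℕ}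
    (z : K) (a c0 d0 : Matrix (Fin r) (Fin r) K)
    (A DA : Matrix (Fin n) (Fin n) K)
    (X : Matrix (Fin r) (Fin n) K) (Y : Matrix (Fin n) (Fin r) K)
    (ha : IsUnit a.det) (hA : IsUnit (z • DA - A).det)
    (hres : a⁻¹ = X * (z • DA - A)⁻¹ * Y)
    (he : IsUnit (z • (d0 * a) + c0).det) :
    Matrix.fromCols (0 : Matrix (Fin r) (Fin r) K) (-X) *
      (Matrix.fromBlocks (z • d0) (-(c0 * X)) Y (z • DA - A))⁻¹ *
      Matrix.fromRows (1 : Matrix (Fin r) (Fin r) K) (0 : Matrix (Fin n) (Fin r) K)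
      = (z • (d0 * a) + c0)⁻¹ := by
  set e := z • (d0 * a) + c0
  have hschur : z • d0 - -(c0 * X) * (z • DA - A)⁻¹ * Y = e * a⁻¹ :=
    calc z • d0 - -(c0 * X) * (z • DA - A)⁻¹ * Y = z • d0 + c0 * (X * (z • DA - A)⁻¹ * Y) := by
          simp only [Matrix.neg_mul, sub_neg_eq_add, Matrix.mul_assoc]
      _ = e * a⁻¹ := by
          rw [← hres, Matrix.add_mul, Matrix.smul_mul, mul_nonsing_inv_cancel_right _ _ ha]
  have hS : IsUnit (e * a⁻¹).det := by
    rw [det_mul]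
    exact he.mul (isUnit_nonsing_inv_det_iff.mpr ha)
  rw [Matrix.mul_assoc, inv_fromBlocks₂₂_mul_fromRows_one_zero _ _ _ _ hA (by rwa [hschur]),
    hschur, fromCols_mul_fromRows, Matrix.mul_inv_rev, nonsing_inv_nonsing_inv a ha]
  simp only [Matrix.zero_mul, zero_add, Matrix.neg_mul, Matrix.mul_neg, neg_neg,
    ← Matrix.mul_assoc]
  rw [← hres, nonsing_inv_mul _ ha, Matrix.one_mul]
end

section
/- Under the hypotheses of Theorem 5 and assuming h(z) = z a(z) d_0 b(z) + c_0 is invertible, the identity [0, 0, X_B] (zD_H - H)^{-1} [Y_A; 0; 0] = h(z)^{-1} holds, where zD_H - H is the 3×3 block matrix [[zD_A - A, 0, Y_A c_0 X_B],[X_A, z d_0, 0],[0, Y_B, zD_B - B]]. -/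
/-!
Write `M` for the block matrix and `h = z a d₀ b + c₀`. Its Schur complement with respect to
`zD_B - B` is `[[zD_A - A, -Y_A c₀ b⁻¹], [X_A, z d₀]]`, whose Schur complement with respect to
`zD_A - A` is, by the two resolvent identities, `z d₀ + a⁻¹ c₀ b⁻¹ = a⁻¹ h b⁻¹`; so `M` is
invertible. The column `((zD_A - A)⁻¹ Y_A (1 - c₀ h⁻¹), -b h⁻¹, (zD_B - B)⁻¹ Y_B b h⁻¹)` solves
`M W = (Y_A, 0, 0)`, and `X_B` applied to its last block is `b⁻¹ b h⁻¹ = h⁻¹`.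
-/

open Matrix

namespace Matrix

theorem fromRows_add_fromRows {R : Type*} [Add R] {m₁ m₂ n : Type*}
    (A₁ B₁ : Matrix m₁ n R) (A₂ B₂ : Matrix m₂ n R) :
    fromRows A₁ A₂ + fromRows B₁ B₂ = fromRows (A₁ + B₁) (A₂ + B₂) := by
  ext (i | i) j <;> rfl

variable {R : Type*} [CommRing R] {m n : Type*} [Fintype m] [Fintype n]
  [DecidableEq m] [DecidableEq n]

theorem isUnit_det_fromBlocks_of_isUnit_det₂₂ {A : Matrix m m R} {B : Matrix m n R}
    {C : Matrix n m R} {D : Matrix n n R} (hD : IsUnit D.det)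
    (hS : IsUnit (A - B * D⁻¹ * C).det) : IsUnit (fromBlocks A B C D).det := by
  let := D.invertibleOfIsUnitDet hD
  rw [det_fromBlocks₂₂, invOf_eq_nonsing_inv]
  exact hD.mul hS

theorem isUnit_det_fromBlocks_of_isUnit_det₁₁ {A : Matrix m m R} {B : Matrix m n R}
    {C : Matrix n m R} {D : Matrix n n R} (hA : IsUnit A.det)
    (hS : IsUnit (D - C * A⁻¹ * B).det) : IsUnit (fromBlocks A B C D).det := by
  let := A.invertibleOfIsUnitDet hA
  rw [det_fromBlocks₁₁, invOf_eq_nonsing_inv]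
  exact hA.mul hS

theorem nonsing_inv_mul_add_mul_nonsing_inv {a b : Matrix n n R} (e c : Matrix n n R)
    (ha : IsUnit a.det) (hb : IsUnit b.det) :
    a⁻¹ * (a * e * b + c) * b⁻¹ = e + a⁻¹ * c * b⁻¹ := by
  rw [Matrix.mul_add, Matrix.add_mul, ← Matrix.mul_assoc, ← Matrix.mul_assoc,
    nonsing_inv_mul _ ha, Matrix.one_mul, Matrix.mul_assoc, mul_nonsing_inv _ hb, Matrix.mul_one]

end Matrix

section Linearization

variable {R : Type*} [CommRing R] {ι κ μ : Type*} [Fintype ι] [Fintype κ] [Fintype μ]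
  [DecidableEq ι] [DecidableEq κ] [DecidableEq μ]

/-- The pencil `zD_H - H`, with `LA = zD_A - A`, `LB = zD_B - B` and `e = z • d₀`. -/
def linearization (c e : Matrix ι ι R) (LA : Matrix κ κ R) (XA : Matrix ι κ R)
    (YA : Matrix κ ι R) (LB : Matrix μ μ R) (XB : Matrix ι μ R) (YB : Matrix μ ι R) :
    Matrix ((κ ⊕ ι) ⊕ μ) ((κ ⊕ ι) ⊕ μ) R :=
  fromBlocks (fromBlocks LA 0 XA e) (fromRows (YA * c * XB) 0) (fromCols 0 YB) LB

variable {a b c e : Matrix ι ι R} {LA : Matrix κ κ R} {XA : Matrix ι κ R} {YA : Matrix κ ι R}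
  {LB : Matrix μ μ R} {XB : Matrix ι μ R} {YB : Matrix μ ι R}

theorem resolvent_mul_cancel_left (hb : IsUnit b.det) (hresb : b⁻¹ = XB * LB⁻¹ * YB)
    (g : Matrix ι ι R) : XB * (LB⁻¹ * (YB * (b * g))) = g := by
  rw [← Matrix.mul_assoc, ← Matrix.mul_assoc, ← hresb, ← Matrix.mul_assoc,
    nonsing_inv_mul _ hb, Matrix.one_mul]

theorem isUnit_det_linearization (ha : IsUnit a.det) (hb : IsUnit b.det)
    (hLA : IsUnit LA.det) (hLB : IsUnit LB.det)
    (hresa : a⁻¹ = XA * LA⁻¹ * YA) (hresb : b⁻¹ = XB * LB⁻¹ * YB)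
    (hh : IsUnit (a * e * b + c).det) :
    IsUnit (linearization c e LA XA YA LB XB YB).det := by
  have hschurB : fromBlocks LA 0 XA e - fromRows (YA * c * XB) 0 * LB⁻¹ * fromCols 0 YB =
      fromBlocks LA (-(YA * c * b⁻¹)) XA e := by
    rw [fromRows_mul, fromRows_mul_fromCols, hresb]
    ext (i | i) (j | j) <;> simp [Matrix.mul_assoc]
  have hschurA : e - XA * LA⁻¹ * -(YA * c * b⁻¹) = a⁻¹ * (a * e * b + c) * b⁻¹ := by
    rw [nonsing_inv_mul_add_mul_nonsing_inv e c ha hb, hresa]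
    simp only [Matrix.mul_neg, sub_neg_eq_add, Matrix.mul_assoc]
  refine isUnit_det_fromBlocks_of_isUnit_det₂₂ hLB ?_
  rw [hschurB]
  refine isUnit_det_fromBlocks_of_isUnit_det₁₁ hLA ?_
  rw [hschurA, det_mul, det_mul]
  exact ((isUnit_nonsing_inv_det a ha).mul hh).mul (isUnit_nonsing_inv_det b hb)

theorem linearization_mul_eq (ha : IsUnit a.det) (hb : IsUnit b.det)
    (hLA : IsUnit LA.det) (hLB : IsUnit LB.det)
    (hresa : a⁻¹ = XA * LA⁻¹ * YA) (hresb : b⁻¹ = XB * LB⁻¹ * YB)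
    (hh : IsUnit (a * e * b + c).det) :
    linearization c e LA XA YA LB XB YB *
        fromRows (fromRows (LA⁻¹ * (YA * (1 - c * (a * e * b + c)⁻¹)))
          (-(b * (a * e * b + c)⁻¹))) (LB⁻¹ * (YB * (b * (a * e * b + c)⁻¹))) =
      fromRows (fromRows YA 0) 0 := by
  set g := (a * e * b + c)⁻¹
  have hrow₁ : LA * (LA⁻¹ * (YA * (1 - c * g))) + YA * c * XB * (LB⁻¹ * (YB * (b * g))) = YA := by
    rw [mul_nonsing_inv_cancel_left _ _ hLA, Matrix.mul_assoc _ XB,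
      resolvent_mul_cancel_left hb hresb, Matrix.mul_sub, Matrix.mul_one, Matrix.mul_assoc,
      sub_add_cancel]
  have hrow₂ : XA * (LA⁻¹ * (YA * (1 - c * g))) + e * -(b * g) = 0 := by
    have hcancel : e * (b * g) = a⁻¹ * (a * e * b * g) := by
      simp only [← Matrix.mul_assoc, nonsing_inv_mul _ ha, Matrix.one_mul]
    calc XA * (LA⁻¹ * (YA * (1 - c * g))) + e * -(b * g)
        = a⁻¹ * (1 - c * g) - a⁻¹ * (a * e * b * g) := by
          rw [← Matrix.mul_assoc, ← Matrix.mul_assoc, ← hresa, Matrix.mul_neg, hcancel,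
            ← sub_eq_add_neg]
      _ = a⁻¹ * (1 - (a * e * b + c) * g) := by
          rw [← Matrix.mul_sub, Matrix.add_mul, sub_sub, add_comm (c * g)]
      _ = 0 := by rw [mul_nonsing_inv _ hh, sub_self, Matrix.mul_zero]
  have hrow₃ : YB * -(b * g) + LB * (LB⁻¹ * (YB * (b * g))) = 0 := by
    rw [mul_nonsing_inv_cancel_left _ _ hLB, Matrix.mul_neg, neg_add_cancel]
  simp only [linearization, fromBlocks_mul_fromRows, fromRows_mul, fromCols_mul_fromRows,
    fromRows_add_fromRows, Matrix.zero_mul, add_zero, zero_add, hrow₁, hrow₂, hrow₃]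

theorem fromCols_mul_inv_linearization_mul_fromRows (ha : IsUnit a.det) (hb : IsUnit b.det)
    (hLA : IsUnit LA.det) (hLB : IsUnit LB.det)
    (hresa : a⁻¹ = XA * LA⁻¹ * YA) (hresb : b⁻¹ = XB * LB⁻¹ * YB)
    (hh : IsUnit (a * e * b + c).det) :
    fromCols (fromCols (0 : Matrix ι κ R) (0 : Matrix ι ι R)) XB *
        (linearization c e LA XA YA LB XB YB)⁻¹ *
        fromRows (fromRows YA (0 : Matrix ι ι R)) (0 : Matrix μ ι R) =
      (a * e * b + c)⁻¹ := by
  rw [Matrix.mul_assoc (fromCols _ XB), ← linearization_mul_eq ha hb hLA hLB hresa hresb hh,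
    nonsing_inv_mul_cancel_left _ _ (isUnit_det_linearization ha hb hLA hLB hresa hresb hh),
    fromCols_mul_fromRows, fromCols_mul_fromRows, Matrix.zero_mul, Matrix.zero_mul, zero_add,
    zero_add, resolvent_mul_cancel_left hb hresb]

end Linearization

theorem resolvent_algebraic_linearization
    {K : Type*} [Field K] {r n m : ℕ}
    (z : K) (a b c0 d0 : Matrix (Fin r) (Fin r) K)
    (A DA : Matrix (Fin n) (Fin n) K) (B DB : Matrix (Fin m) (Fin m) K)
    (XA : Matrix (Fin r) (Fin n) K) (YA : Matrix (Fin n) (Fin r) K)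
    (XB : Matrix (Fin r) (Fin m) K) (YB : Matrix (Fin m) (Fin r) K)
    (ha : IsUnit a.det) (hb : IsUnit b.det)
    (hA : IsUnit (z • DA - A).det) (hB : IsUnit (z • DB - B).det)
    (hresa : a⁻¹ = XA * (z • DA - A)⁻¹ * YA)
    (hresb : b⁻¹ = XB * (z • DB - B)⁻¹ * YB)
    (hh : IsUnit (z • (a * d0 * b) + c0).det) :
    Matrix.fromCols
        (Matrix.fromCols (0 : Matrix (Fin r) (Fin n) K) (0 : Matrix (Fin r) (Fin r) K)) XB *
      (Matrix.fromBlocks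
        (Matrix.fromBlocks (z • DA - A) 0 XA (z • d0))
        (Matrix.fromRows (YA * c0 * XB) (0 : Matrix (Fin r) (Fin m) K))
        (Matrix.fromCols (0 : Matrix (Fin m) (Fin n) K) YB)
        (z • DB - B))⁻¹ *
      Matrix.fromRows
        (Matrix.fromRows YA (0 : Matrix (Fin r) (Fin r) K)) (0 : Matrix (Fin m) (Fin r) K)
      = (z • (a * d0 * b) + c0)⁻¹ := by
  have hsmul : z • (a * d0 * b) = a * (z • d0) * b := by
    rw [Matrix.mul_smul, Matrix.smul_mul]
  rw [hsmul] at hh ⊢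
  exact fromCols_mul_inv_linearization_mul_fromRows ha hb hA hB hresa hresb hh
end

section
/- Suppose M is an n×n matrix with p(z) = det(zI - M). If X is a 1×n row vector and Y an n×1 column vector with X(zI - M)^{-1}Y = 1/p(z), then the (2n+1)×(2n+1) matrix M' = [[M, 0, -Y·X],[-X, 0, 0],[0, -Y, M]] (with appropriate block sizes) satisfies det(zI - M') = z·p(z)^2 + 1. -/
open Matrix

theorem scalar_gluing_construction
    {K : Type*} [Field K] {n : ℕ}
    (M : Matrix (Fin n) (Fin n) K)
    (X : Matrix (Fin 1) (Fin n) K) (Y : Matrix (Fin n) (Fin 1) K)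
    (hres : ∀ z : K, IsUnit (z • (1 : Matrix (Fin n) (Fin n) K) - M).det →
      X * (z • (1 : Matrix (Fin n) (Fin n) K) - M)⁻¹ * Y
        = ((z • (1 : Matrix (Fin n) (Fin n) K) - M).det)⁻¹ • (1 : Matrix (Fin 1) (Fin 1) K)) :
    ∀ z : K, IsUnit (z • (1 : Matrix (Fin n) (Fin n) K) - M).det →
      (z • (1 : Matrix ((Fin n ⊕ Fin 1) ⊕ Fin n) ((Fin n ⊕ Fin 1) ⊕ Fin n) K) -
          Matrix.fromBlocks
            (Matrix.fromBlocks M 0 (-X) 0)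
            (Matrix.fromRows (-(Y * X)) (0 : Matrix (Fin 1) (Fin n) K))
            (Matrix.fromCols (0 : Matrix (Fin n) (Fin n) K) (-Y))
            M).det
        = z * ((z • (1 : Matrix (Fin n) (Fin n) K) - M).det) ^ 2 + 1 := by
  intro z hz
  set A : Matrix (Fin n) (Fin n) K := z • (1 : Matrix (Fin n) (Fin n) K) - M with hA
  set d : K := A.det with hd
  haveI : Invertible A := A.invertibleOfIsUnitDet hz
  have hinv : ⅟A = A⁻¹ := invOf_eq_nonsing_inv A
  have hXY : X * A⁻¹ * Y = d⁻¹ • (1 : Matrix (Fin 1) (Fin 1) K) := hres z hz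
  have h1 : z • (1 : Matrix ((Fin n ⊕ Fin 1) ⊕ Fin n) ((Fin n ⊕ Fin 1) ⊕ Fin n) K) -
          Matrix.fromBlocks
            (Matrix.fromBlocks M 0 (-X) 0)
            (Matrix.fromRows (-(Y * X)) (0 : Matrix (Fin 1) (Fin n) K))
            (Matrix.fromCols (0 : Matrix (Fin n) (Fin n) K) (-Y))
            M
      = Matrix.fromBlocks
          (Matrix.fromBlocks A 0 X (z • (1 : Matrix (Fin 1) (Fin 1) K)))
          (Matrix.fromRows (Y * X) (0 : Matrix (Fin 1) (Fin n) K))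
          (Matrix.fromCols (0 : Matrix (Fin n) (Fin n) K) Y)
          A := by
    ext (i | i) (j | j) <;>
      simp [Matrix.fromBlocks, Matrix.fromRows, Matrix.fromCols, Matrix.one_apply, hA,
        Matrix.sub_apply, Matrix.smul_apply] <;>
      rcases i with (i | i) <;> rcases j with (j | j) <;>
      simp [Matrix.one_apply, Sum.elim]
  rw [h1, Matrix.det_fromBlocks₂₂]
  have h2 : Matrix.fromRows (Y * X) (0 : Matrix (Fin 1) (Fin n) K) * ⅟A *
        Matrix.fromCols (0 : Matrix (Fin n) (Fin n) K) Y
      = Matrix.fromBlocks (0 : Matrix (Fin n) (Fin n) K) (d⁻¹ • Y)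
          (0 : Matrix (Fin 1) (Fin n) K) (0 : Matrix (Fin 1) (Fin 1) K) := by
    rw [hinv, Matrix.fromRows_mul, Matrix.fromRows_mul_fromCols]
    have : Y * X * A⁻¹ * Y = d⁻¹ • Y := by
      calc Y * X * A⁻¹ * Y = Y * (X * A⁻¹ * Y) := by simp [Matrix.mul_assoc]
        _ = Y * (d⁻¹ • (1 : Matrix (Fin 1) (Fin 1) K)) := by rw [hXY]
        _ = d⁻¹ • Y := by rw [Matrix.mul_smul, Matrix.mul_one]
    simp [this]
  rw [h2]
  have h3 : Matrix.fromBlocks A 0 X (z • (1 : Matrix (Fin 1) (Fin 1) K)) -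
        Matrix.fromBlocks (0 : Matrix (Fin n) (Fin n) K) (d⁻¹ • Y)
          (0 : Matrix (Fin 1) (Fin n) K) (0 : Matrix (Fin 1) (Fin 1) K)
      = Matrix.fromBlocks A (-(d⁻¹ • Y)) X (z • (1 : Matrix (Fin 1) (Fin 1) K)) := by
    ext (i | i) (j | j) <;> simp [Matrix.fromBlocks]
  rw [h3, Matrix.det_fromBlocks₁₁]
  have h4 : z • (1 : Matrix (Fin 1) (Fin 1) K) - X * ⅟A * (-(d⁻¹ • Y))
      = (z + d⁻¹ * d⁻¹) • (1 : Matrix (Fin 1) (Fin 1) K) := by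
    rw [hinv, Matrix.mul_neg, Matrix.mul_smul, sub_neg_eq_add, hXY, smul_smul, add_smul]
  rw [h4]
  have h5 : ((z + d⁻¹ * d⁻¹) • (1 : Matrix (Fin 1) (Fin 1) K)).det = z + d⁻¹ * d⁻¹ := by
    simp [Matrix.det_fin_one, Matrix.smul_apply, Matrix.one_apply]
  rw [h5]
  have hd0 : d ≠ 0 := hz.ne_zero
  field_simp
  ring
end

section
/- If A is an n×n monic linearization of the r×r matrix polynomial a(z) of degree s with standard triple (X, A, Y), i.e. X(zI - A)^{-1}Y = a(z)^{-1}, and c(z) = Σ_{k=0}^{s-1} c_k z^k has degree at most s-1, then G = A - Σ_{k=0}^{s-1} A^k Y c_k X satisfies X(zI - G)^{-1}Y = (a(z) + c(z))^{-1} for all z where a(z)+c(z) is invertible. -/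
/-!
Write `q = a + c` and `G = A - ∑ₖ Aᵏ Y cₖ X`. Because `X Aᵏ Y = δ_{k,s-1}` for `k < s`, the
correction term of `G` kills `Y, AY, …, A^{s-2}Y`, so `Gᵏ Y = Aᵏ Y` for `k < s`, while
`Gˢ Y = Aˢ Y - ∑ₖ Aᵏ Y cₖ = -∑ₖ Gᵏ Y (αₖ + cₖ)`. Thus `(X, G, Y)` satisfies the same
Cayley–Hamilton relation, normalisation and Vandermonde condition for `q` as `(X, A, Y)` does for
`a`, and these alone give the resolvent formula: dividing `Y q(z) = ∑ₖ (zᵏ - Gᵏ) Y qₖ` termwise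
by `z - G` gives `S(z)` with `(z - G) S(z) = Y q(z)` and `X S(z) = I`. Since `z - G` commutes
with `G`, its range then contains every `Gᵏ Y`, so the Vandermonde makes `z - G` invertible and
`X (z - G)⁻¹ Y = X S(z) q(z)⁻¹ = q(z)⁻¹`.
-/

open Matrix Finset

section MatrixPolynomial

variable {K : Type*} [Field K]

section MonicEval

variable {m : Type*} [DecidableEq m] {s : ℕ}

def monicEval (γ : Fin s → Matrix m m K) (z : K) : Matrix m m K :=
  z ^ s • 1 + ∑ k : Fin s, z ^ (k : ℕ) • γ k

lemma monicEval_add (α c : Fin s → Matrix m m K) (z : K) :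
    monicEval (α + c) z = monicEval α z + ∑ k : Fin s, z ^ (k : ℕ) • c k := by
  simp only [monicEval, Pi.add_apply, smul_add, sum_add_distrib, add_assoc]

end MonicEval

section BlockKrylov

variable {n m : Type*} [Fintype n] [DecidableEq n] {s : ℕ}

def blockKrylov (M : Matrix n n K) (Y : Matrix n m K) (s : ℕ) : Matrix n (Fin s × m) K :=
  of fun i j => (M ^ (j.1 : ℕ) * Y) i j.2

lemma mul_blockKrylov {N M : Matrix n n K} (hNM : Commute N M) (W : Matrix n m K) :
    N * blockKrylov M W s = blockKrylov M (N * W) s := by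
  ext i j
  have hcol : N * (M ^ (j.1 : ℕ) * W) = M ^ (j.1 : ℕ) * (N * W) := by
    rw [← Matrix.mul_assoc, (hNM.pow_right _).eq, Matrix.mul_assoc]
  simpa [blockKrylov, mul_apply] using congrFun (congrFun hcol i) j.2

lemma isUnit_det_sub_of_isUnit_det_blockKrylov [Fintype m] [DecidableEq m]
    {M : Matrix (Fin s × m) (Fin s × m) K} {Y : Matrix (Fin s × m) m K}
    (hV : IsUnit (blockKrylov M Y s).det) {z : K} {W : Matrix (Fin s × m) m K}
    (hW : (z • 1 - M) * W = Y) : IsUnit (z • 1 - M).det := by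
  have hcomm : Commute (z • 1 - M) M := ((Commute.one_left M).smul_left z).sub_left (.refl M)
  rw [← hW, ← mul_blockKrylov hcomm, det_mul] at hV
  exact isUnit_of_mul_isUnit_left hV

end BlockKrylov

section Resolvent

variable {n m : Type*} [Fintype n] [DecidableEq n] {s : ℕ}

def powQuot (M : Matrix n n K) (z : K) (k : ℕ) : Matrix n n K :=
  ∑ i ∈ range k, M ^ i * (z • 1) ^ (k - 1 - i)

lemma sub_mul_powQuot (M : Matrix n n K) (z : K) (k : ℕ) :
    (z • 1 - M) * powQuot M z k = z ^ k • 1 - M ^ k := by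
  have hcomm : Commute (z • (1 : Matrix n n K)) M := (Commute.one_left M).smul_left z
  rw [powQuot, ← hcomm.geom_sum₂_comm, hcomm.mul_geom_sum₂, smul_pow, one_pow]

lemma mul_powQuot_mul (M : Matrix n n K) (X : Matrix m n K) (Y : Matrix n m K) (z : K) (k : ℕ) :
    X * powQuot M z k * Y = ∑ i ∈ range k, z ^ (k - 1 - i) • (X * (M ^ i * Y)) := by
  simp only [powQuot, Matrix.mul_sum, Matrix.sum_mul, smul_pow, one_pow, Matrix.mul_smul,
    Matrix.smul_mul, Matrix.mul_one, Matrix.mul_assoc]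

lemma mul_powQuot_mul_of_le [DecidableEq m] {M : Matrix n n K} {X : Matrix m n K}
    {Y : Matrix n m K} (hs : 0 < s)
    (hX : ∀ k : Fin s, X * (M ^ (k : ℕ) * Y) = if (k : ℕ) = s - 1 then 1 else 0)
    (z : K) {k : ℕ} (hk : k ≤ s) :
    X * powQuot M z k * Y = if k = s then 1 else 0 := by
  have hXi : ∀ i ∈ range k, z ^ (k - 1 - i) • (X * (M ^ i * Y))
      = if i = s - 1 then z ^ (k - 1 - i) • (1 : Matrix m m K) else 0 := fun i hi => by
    rw [hX ⟨i, by grind⟩, smul_ite, smul_zero]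
  rw [mul_powQuot_mul, sum_congr rfl hXi, sum_ite_eq']
  by_cases hks : k = s
  · simp [hks, hs]
  · simp [hks, show ¬ s - 1 < k by omega]

/-- `(z - M)⁻¹ Y q(z)` without inverting `z - M`: by Cayley–Hamilton `Y q(z) = ∑ₖ (zᵏ - Mᵏ) Y γₖ`
(with `γₛ = 1`), and this divides that sum termwise by `z - M`. -/
def resolventNumerator [Fintype m] (M : Matrix n n K) (Y : Matrix n m K)
    (γ : Fin s → Matrix m m K) (z : K) : Matrix n m K :=
  powQuot M z s * Y + ∑ k : Fin s, powQuot M z k * Y * γ k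

variable [Fintype m] [DecidableEq m] {M : Matrix n n K} {X : Matrix m n K} {Y : Matrix n m K}

lemma sub_mul_resolventNumerator (γ : Fin s → Matrix m m K)
    (hMY : M ^ s * Y = -∑ k : Fin s, M ^ (k : ℕ) * Y * γ k) (z : K) :
    (z • 1 - M) * resolventNumerator M Y γ z = Y * monicEval γ z := by
  have hpow : ∀ k, (z • 1 - M) * powQuot M z k * Y = z ^ k • Y - M ^ k * Y := fun k => by
    rw [sub_mul_powQuot, Matrix.sub_mul, Matrix.smul_mul, Matrix.one_mul]
  calc (z • 1 - M) * resolventNumerator M Y γ z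
      = (z • 1 - M) * powQuot M z s * Y
          + ∑ k : Fin s, (z • 1 - M) * powQuot M z k * Y * γ k := by
        simp only [resolventNumerator, Matrix.mul_add, Matrix.mul_sum, Matrix.mul_assoc]
    _ = (z ^ s • Y - M ^ s * Y)
          + ∑ k : Fin s, (z ^ (k : ℕ) • Y - M ^ (k : ℕ) * Y) * γ k := by
        simp only [hpow]
    _ = Y * monicEval γ z - (M ^ s * Y + ∑ k : Fin s, M ^ (k : ℕ) * Y * γ k) := by
        simp only [monicEval, Matrix.sub_mul, sum_sub_distrib, Matrix.mul_add, Matrix.mul_sum,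
          Matrix.mul_smul, Matrix.smul_mul, Matrix.mul_one]
        abel
    _ = Y * monicEval γ z := by rw [hMY, neg_add_cancel, sub_zero]

lemma mul_resolventNumerator (hs : 0 < s)
    (hX : ∀ k : Fin s, X * (M ^ (k : ℕ) * Y) = if (k : ℕ) = s - 1 then 1 else 0)
    (γ : Fin s → Matrix m m K) (z : K) :
    X * resolventNumerator M Y γ z = 1 := by
  have hlow : ∀ k : Fin s, X * (powQuot M z k * Y * γ k) = 0 := fun k => by
    rw [← Matrix.mul_assoc, ← Matrix.mul_assoc, mul_powQuot_mul_of_le hs hX z k.is_lt.le,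
      if_neg k.is_lt.ne, Matrix.zero_mul]
  rw [resolventNumerator, Matrix.mul_add, ← Matrix.mul_assoc,
    mul_powQuot_mul_of_le hs hX z le_rfl, if_pos rfl, Matrix.mul_sum,
    sum_congr rfl fun k _ => hlow k, sum_const_zero, add_zero]

end Resolvent

section StandardTriple

variable {m : Type*} [Fintype m] [DecidableEq m] {s : ℕ}
  {M : Matrix (Fin s × m) (Fin s × m) K} {X : Matrix m (Fin s × m) K} {Y : Matrix (Fin s × m) m K}

lemma mul_inv_sub_mul_eq_monicEval_inv (hs : 0 < s) (γ : Fin s → Matrix m m K)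
    (hV : IsUnit (blockKrylov M Y s).det)
    (hMY : M ^ s * Y = -∑ k : Fin s, M ^ (k : ℕ) * Y * γ k)
    (hX : ∀ k : Fin s, X * (M ^ (k : ℕ) * Y) = if (k : ℕ) = s - 1 then 1 else 0)
    {z : K} (hq : IsUnit (monicEval γ z).det) :
    X * (z • 1 - M)⁻¹ * Y = (monicEval γ z)⁻¹ := by
  have hS := sub_mul_resolventNumerator γ hMY z
  have hdet : IsUnit (z • 1 - M).det := isUnit_det_sub_of_isUnit_det_blockKrylov hV
    (W := resolventNumerator M Y γ z * (monicEval γ z)⁻¹)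
    (by rw [← Matrix.mul_assoc, hS, Matrix.mul_assoc, mul_nonsing_inv _ hq, Matrix.mul_one])
  have hinv : (z • 1 - M)⁻¹ * Y * monicEval γ z = resolventNumerator M Y γ z := by
    rw [Matrix.mul_assoc, ← hS, ← Matrix.mul_assoc, nonsing_inv_mul _ hdet, Matrix.one_mul]
  refine (inv_eq_left_inv ?_).symm
  rw [Matrix.mul_assoc X, Matrix.mul_assoc X, hinv, mul_resolventNumerator hs hX]

end StandardTriple

section Feedback

variable {n m : Type*} [Fintype n] [DecidableEq n] [Fintype m] {s : ℕ}

def feedback (M : Matrix n n K) (X : Matrix m n K) (Y : Matrix n m K)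
    (C : Fin s → Matrix m m K) : Matrix n n K :=
  M - ∑ j : Fin s, M ^ (j : ℕ) * Y * C j * X

variable [DecidableEq m] {M : Matrix n n K} {X : Matrix m n K} {Y : Matrix n m K}

lemma feedback_mul_pow_mul (C : Fin s → Matrix m m K)
    (hX : ∀ k : Fin s, X * (M ^ (k : ℕ) * Y) = if (k : ℕ) = s - 1 then 1 else 0) (k : Fin s) :
    feedback M X Y C * (M ^ (k : ℕ) * Y)
      = M ^ ((k : ℕ) + 1) * Y
          - if (k : ℕ) = s - 1 then ∑ j : Fin s, M ^ (j : ℕ) * Y * C j else 0 := by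
  rw [feedback, Matrix.sub_mul, ← Matrix.mul_assoc, ← pow_succ', Matrix.sum_mul]
  simp only [Matrix.mul_assoc _ X, hX k]
  split_ifs <;> simp

lemma feedback_pow_mul_of_lt (C : Fin s → Matrix m m K)
    (hX : ∀ k : Fin s, X * (M ^ (k : ℕ) * Y) = if (k : ℕ) = s - 1 then 1 else 0) :
    ∀ k < s, feedback M X Y C ^ k * Y = M ^ k * Y
  | 0, _ => by simp
  | k + 1, hk => by
    rw [pow_succ', Matrix.mul_assoc, feedback_pow_mul_of_lt C hX k (by omega),
      feedback_mul_pow_mul C hX ⟨k, by omega⟩, if_neg (by simp; omega), sub_zero]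

lemma feedback_pow_mul_self (hs : 0 < s) (C : Fin s → Matrix m m K)
    (hX : ∀ k : Fin s, X * (M ^ (k : ℕ) * Y) = if (k : ℕ) = s - 1 then 1 else 0) :
    feedback M X Y C ^ s * Y = M ^ s * Y - ∑ j : Fin s, M ^ (j : ℕ) * Y * C j := by
  obtain ⟨t, rfl⟩ : ∃ t, s = t + 1 := ⟨s - 1, by omega⟩
  have hlast := feedback_mul_pow_mul C hX (Fin.last t)
  rw [Fin.val_last, if_pos (Nat.add_sub_cancel t 1).symm] at hlast
  rw [pow_succ', Matrix.mul_assoc, feedback_pow_mul_of_lt C hX t (by omega), hlast]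

end Feedback

end MatrixPolynomial

theorem monic_addition_linearization_general
    {K : Type*} [Field K] {r s : ℕ} (hs : 0 < s)
    (α c : Fin s → Matrix (Fin r) (Fin r) K)
    (A : Matrix (Fin s × Fin r) (Fin s × Fin r) K)
    (X : Matrix (Fin r) (Fin s × Fin r) K)
    (Y : Matrix (Fin s × Fin r) (Fin r) K)
    -- invertibility of the block Vandermonde V = [Y, AY, ..., A^{s-1}Y]
    (hV : IsUnit (Matrix.of fun (i : Fin s × Fin r) (j : Fin s × Fin r) =>
        (A ^ (j.1 : ℕ) * Y) i j.2).det)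
    -- generalized Cayley–Hamilton: A^s Y = -∑ A^{k} Y α_k
    (hAY : A ^ s * Y = -∑ k : Fin s, A ^ (k : ℕ) * Y * α k)
    -- X = [0, ..., 0, I] V⁻¹
    (hX : ∀ k : Fin s, X * (A ^ (k : ℕ) * Y)
        = if (k : ℕ) = s - 1 then (1 : Matrix (Fin r) (Fin r) K) else 0) :
    ∀ z : K,
      IsUnit ((z ^ s • (1 : Matrix (Fin r) (Fin r) K) + ∑ k : Fin s, z ^ (k : ℕ) • α k)
          + ∑ k : Fin s, z ^ (k : ℕ) • c k).det →
      X * (z • (1 : Matrix (Fin s × Fin r) (Fin s × Fin r) K)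
            - (A - ∑ k : Fin s, A ^ (k : ℕ) * Y * c k * X))⁻¹ * Y
        = ((z ^ s • (1 : Matrix (Fin r) (Fin r) K) + ∑ k : Fin s, z ^ (k : ℕ) • α k)
            + ∑ k : Fin s, z ^ (k : ℕ) • c k)⁻¹ := by
  intro z hq
  have hGY : ∀ k : Fin s, feedback A X Y c ^ (k : ℕ) * Y = A ^ (k : ℕ) * Y :=
    fun k => feedback_pow_mul_of_lt c hX k k.is_lt
  have hGs :
      feedback A X Y c ^ s * Y = -∑ k : Fin s, feedback A X Y c ^ (k : ℕ) * Y * (α + c) k :=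
    calc feedback A X Y c ^ s * Y = A ^ s * Y - ∑ k : Fin s, A ^ (k : ℕ) * Y * c k :=
          feedback_pow_mul_self hs c hX
      _ = _ := by
          simp only [hAY, hGY, Pi.add_apply, Matrix.mul_add, sum_add_distrib]
          abel
  rw [show z ^ s • 1 + ∑ k : Fin s, z ^ (k : ℕ) • α k = monicEval α z from rfl,
    ← monicEval_add] at hq ⊢
  exact mul_inv_sub_mul_eq_monicEval_inv hs (α + c) (by simpa only [blockKrylov, hGY] using hV)
    hGs (fun k => hGY k ▸ hX k) hq

theorem monic_addition_linearization
    {K : Type*} [Field K] {r s : ℕ} (hs : 0 < s)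
    (α c : Fin s → Matrix (Fin r) (Fin r) K)
    (A : Matrix (Fin s × Fin r) (Fin s × Fin r) K)
    (X : Matrix (Fin r) (Fin s × Fin r) K)
    (Y : Matrix (Fin s × Fin r) (Fin r) K)
    -- resolvent form of the standard triple
    (hres : ∀ z : K, IsUnit (z • (1 : Matrix (Fin s × Fin r) (Fin s × Fin r) K) - A).det →
      X * (z • (1 : Matrix (Fin s × Fin r) (Fin s × Fin r) K) - A)⁻¹ * Y
        = (z ^ s • (1 : Matrix (Fin r) (Fin r) K) + ∑ k : Fin s, z ^ (k : ℕ) • α k)⁻¹)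
    -- invertibility of the block Vandermonde V = [Y, AY, ..., A^{s-1}Y]
    (hV : IsUnit (Matrix.of fun (i : Fin s × Fin r) (j : Fin s × Fin r) =>
        (A ^ (j.1 : ℕ) * Y) i j.2).det)
    -- generalized Cayley–Hamilton: A^s Y = -∑ A^{k} Y α_k
    (hAY : A ^ s * Y = -∑ k : Fin s, A ^ (k : ℕ) * Y * α k)
    -- X = [0, ..., 0, I] V⁻¹
    (hX : ∀ k : Fin s, X * (A ^ (k : ℕ) * Y)
        = if (k : ℕ) = s - 1 then (1 : Matrix (Fin r) (Fin r) K) else 0) :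
    ∀ z : K,
      IsUnit ((z ^ s • (1 : Matrix (Fin r) (Fin r) K) + ∑ k : Fin s, z ^ (k : ℕ) • α k)
          + ∑ k : Fin s, z ^ (k : ℕ) • c k).det →
      X * (z • (1 : Matrix (Fin s × Fin r) (Fin s × Fin r) K)
            - (A - ∑ k : Fin s, A ^ (k : ℕ) * Y * c k * X))⁻¹ * Y
        = ((z ^ s • (1 : Matrix (Fin r) (Fin r) K) + ∑ k : Fin s, z ^ (k : ℕ) • α k)
            + ∑ k : Fin s, z ^ (k : ℕ) • c k)⁻¹ :=
  monic_addition_linearization_general hs α c A X Y hV hAY hX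
end

section
/- Each Mandelbrot matrix M_n (n ≥ 2) is invertible, and every entry of M_n^{-1} lies in {-1, 0, 1}; moreover the bottom-left entry of M_n^{-1} is -1. -/
open Matrix

/-- Dimension of the Mandelbrot matrix `M_{k+2}`: `dm 0 = 1`, `dm (k+1) = 2 * dm k + 1`. -/
def dm : ℕ → ℕ
  | 0 => 1
  | k + 1 => 2 * dm k + 1

theorem dm_pos (k : ℕ) : 0 < dm k := by
  induction k with
  | zero => decide
  | succ k ih => unfold dm; omega

/-- Row vector `X_k = e_{d_k}ᵀ` (last standard basis row vector). -/
def mandX (k : ℕ) : Matrix (Fin 1) (Fin (dm k)) ℤ :=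
  Matrix.of fun _ j => if (j : ℕ) = dm k - 1 then 1 else 0

/-- Column vector `Y_k = e_1` (first standard basis column vector). -/
def mandY (k : ℕ) : Matrix (Fin (dm k)) (Fin 1) ℤ :=
  Matrix.of fun i _ => if (i : ℕ) = 0 then 1 else 0

/-- The Mandelbrot matrices: `mand 0 = M_2 = [-1]`, and `mand (k+1) = M_{k+3}` glues two
copies of `mand k` per the algebraic linearization with `c_0 = d_0 = 1`. -/
def mand : (k : ℕ) → Matrix (Fin (dm k)) (Fin (dm k)) ℤ
  | 0 => !![-1]
  | k + 1 =>
    Matrix.reindex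
      (((Equiv.sumCongr finSumFinEquiv (Equiv.refl (Fin (dm k)))).trans
          finSumFinEquiv).trans (finCongr (by simp [dm]; omega)))
      (((Equiv.sumCongr finSumFinEquiv (Equiv.refl (Fin (dm k)))).trans
          finSumFinEquiv).trans (finCongr (by simp [dm]; omega)))
      (Matrix.fromBlocks
        (Matrix.fromBlocks (mand k) 0 (-(mandX k)) 0)
        (Matrix.fromRows (-(mandY k * mandX k)) (0 : Matrix (Fin 1) (Fin (dm k)) ℤ))
        (Matrix.fromCols (0 : Matrix (Fin (dm k)) (Fin (dm k)) ℤ) (-(mandY k)))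
        (mand k))

/-!
`M_{k+1}` glues two copies of `M_k` through `X = e_dᵀ` and `Y = e_1`. If `M_k K = 1` and
`X K Y = K_{d,1} = -1`, then an explicit block matrix `glueInv K X Y`, built from the column
`K Y`, the row `X K` and the rank-one update `K + (K Y)(X K)`, inverts `M_{k+1}`, and its own
`(d, 1)` entry is again `-1`. All its blocks have entries in `{-1, 0, 1}` as soon as `K` and
`K + (K Y)(X K)` do, and the rank-one update of the new inverse consists of blocks of the same
kind, so both properties propagate along the recursion.
-/

theorem Matrix.fromRows_add_fromRows_s17 {α m₁ m₂ n : Type*} [Add α] (A₁ B₁ : Matrix m₁ n α)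
    (A₂ B₂ : Matrix m₂ n α) : fromRows A₁ A₂ + fromRows B₁ B₂ = fromRows (A₁ + B₁) (A₂ + B₂) := by
  ext (i | i) j <;> rfl

theorem Matrix.fromCols_add_fromCols {α m n₁ n₂ : Type*} [Add α] (A₁ B₁ : Matrix m n₁ α)
    (A₂ B₂ : Matrix m n₂ α) : fromCols A₁ A₂ + fromCols B₁ B₂ = fromCols (A₁ + B₁) (A₂ + B₂) := by
  ext i (j | j) <;> rfl

section Glue

variable {R : Type*} [Ring R] {m : Type*} [Fintype m]

def glue (M : Matrix m m R) (X : Matrix (Fin 1) m R) (Y : Matrix m (Fin 1) R) :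
    Matrix ((m ⊕ Fin 1) ⊕ m) ((m ⊕ Fin 1) ⊕ m) R :=
  fromBlocks (fromBlocks M 0 (-X) 0) (fromRows (-(Y * X)) 0) (fromCols 0 (-Y)) M

def rankOneUpdate (K : Matrix m m R) (X : Matrix (Fin 1) m R) (Y : Matrix m (Fin 1) R) :
    Matrix m m R :=
  K + K * Y * (X * K)

def glueInv (K : Matrix m m R) (X : Matrix (Fin 1) m R) (Y : Matrix m (Fin 1) R) :
    Matrix ((m ⊕ Fin 1) ⊕ m) ((m ⊕ Fin 1) ⊕ m) R :=
  fromBlocks (fromBlocks (rankOneUpdate K X Y) (K * Y) (-(X * K)) (-1))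
    (fromRows 0 (X * K)) (fromCols (-(K * Y * (X * K))) (-(K * Y))) (rankOneUpdate K X Y)

def glueX (X : Matrix (Fin 1) m R) : Matrix (Fin 1) ((m ⊕ Fin 1) ⊕ m) R :=
  fromCols (fromCols 0 0) X

def glueY (Y : Matrix m (Fin 1) R) : Matrix ((m ⊕ Fin 1) ⊕ m) (Fin 1) R :=
  fromRows (fromRows Y 0) 0

variable {M K : Matrix m m R} {X : Matrix (Fin 1) m R} {Y : Matrix m (Fin 1) R}

theorem rankOneUpdate_reindex {l : Type*} [Fintype l] (e : m ≃ l) :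
    rankOneUpdate (reindex e e K) (reindex (Equiv.refl _) e X) (reindex e (Equiv.refl _) Y) =
      reindex e e (rankOneUpdate K X Y) := by
  simp only [rankOneUpdate, reindex_apply, submatrix_mul_equiv]
  rfl

theorem glue_mul_glueInv [DecidableEq m] (hMK : M * K = 1) (hXKY : X * K * Y = -1) :
    glue M X Y * glueInv K X Y = 1 := by
  have hMKY : M * (K * Y) = Y := by rw [← Matrix.mul_assoc, hMK, Matrix.one_mul]
  have hMKYXK : M * (K * (Y * (X * K))) = Y * (X * K) := by
    rw [← Matrix.mul_assoc, hMK, Matrix.one_mul]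
  have hXKY' : X * (K * Y) = -1 := by rw [← Matrix.mul_assoc, hXKY]
  have hXKYXK : X * (K * (Y * (X * K))) = -(X * K) := by
    rw [← Matrix.mul_assoc, ← Matrix.mul_assoc, hXKY, Matrix.neg_mul, Matrix.one_mul]
  simp only [glue, glueInv, rankOneUpdate, fromBlocks_multiply, fromRows_mul, mul_fromCols,
    fromCols_mul_fromRows, fromCols_mul_fromBlocks, fromBlocks_mul_fromRows, Matrix.mul_zero,
    Matrix.zero_mul, Matrix.mul_neg, Matrix.neg_mul, neg_neg, add_zero, zero_add, Matrix.mul_add,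
    Matrix.mul_one, Matrix.mul_assoc, hMK, hMKY, hMKYXK, hXKY', hXKYXK, neg_zero]
  simp only [fromBlocks_add, fromRows_add_fromRows_s17, fromCols_add_fromCols, add_neg_cancel,
    neg_add_cancel, add_neg_cancel_right, neg_add_cancel_comm_assoc, add_zero, fromRows_zero,
    fromCols_zero, fromBlocks_one, fromCols_fromRows_eq_fromBlocks, fromRows_neg, neg_zero]

theorem glueInv_mul_glueY (hXKY : X * K * Y = -1) :
    glueInv K X Y * glueY Y = fromRows (fromRows 0 1) (K * Y) := by
  have hXKY' : X * (K * Y) = -1 := by rw [← Matrix.mul_assoc, hXKY]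
  simp only [glueInv, rankOneUpdate, glueY, fromBlocks_mul_fromRows, fromCols_mul_fromRows,
    Matrix.mul_zero, Matrix.mul_neg, Matrix.neg_mul, neg_neg, add_zero, Matrix.add_mul,
    Matrix.mul_one, Matrix.mul_assoc, hXKY', add_neg_cancel]

theorem glueX_mul_glueInv (hXKY : X * K * Y = -1) :
    glueX X * glueInv K X Y = fromCols (fromCols (X * K) 1) 0 := by
  have hXKY' : X * (K * Y) = -1 := by rw [← Matrix.mul_assoc, hXKY]
  have hXKYXK : X * (K * (Y * (X * K))) = -(X * K) := by
    rw [← Matrix.mul_assoc, ← Matrix.mul_assoc, hXKY, Matrix.neg_mul, Matrix.one_mul]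
  simp only [glueInv, rankOneUpdate, glueX, fromCols_mul_fromBlocks, mul_fromCols,
    Matrix.zero_mul, Matrix.mul_neg, neg_neg, add_zero, zero_add, Matrix.mul_add,
    Matrix.mul_assoc, hXKY', hXKYXK, add_neg_cancel, fromCols_zero]

theorem glueX_mul_glueInv_mul_glueY (hXKY : X * K * Y = -1) :
    glueX X * glueInv K X Y * glueY Y = -1 := by
  simp only [glueX_mul_glueInv hXKY, glueY, fromCols_mul_fromRows, Matrix.mul_zero, add_zero,
    hXKY]

theorem rankOneUpdate_glueInv (hXKY : X * K * Y = -1) :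
    rankOneUpdate (glueInv K X Y) (glueX X) (glueY Y) =
      fromBlocks (fromBlocks (rankOneUpdate K X Y) (K * Y) 0 0) (fromRows 0 (X * K)) 0
        (rankOneUpdate K X Y) := by
  rw [rankOneUpdate, glueInv_mul_glueY hXKY, glueX_mul_glueInv hXKY, fromRows_mul_fromCols,
    fromRows_mul_fromCols, mul_fromCols]
  simp only [glueInv, fromBlocks_add, fromCols_add_fromCols, Matrix.mul_zero, Matrix.zero_mul,
    Matrix.mul_one, Matrix.one_mul, add_zero, neg_add_cancel, fromCols_zero]

end Glue

section Bohemian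

variable {l m n : Type*}

def IsBohemian (A : Matrix m n ℤ) : Prop :=
  ∀ i j, A i j ∈ ({-1, 0, 1} : Set ℤ)

theorem isBohemian_zero : IsBohemian (0 : Matrix m n ℤ) := by
  simp [IsBohemian]

theorem isBohemian_one [DecidableEq n] : IsBohemian (1 : Matrix n n ℤ) := by
  intro i j
  by_cases h : i = j <;> simp [one_apply, h]

theorem IsBohemian.neg {A : Matrix m n ℤ} (hA : IsBohemian A) : IsBohemian (-A) := by
  intro i j
  rcases hA i j with h | h | h <;> simp_all

theorem IsBohemian.submatrix {A : Matrix m n ℤ} (hA : IsBohemian A) {m' n' : Type*}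
    (f : m' → m) (g : n' → n) : IsBohemian (A.submatrix f g) :=
  fun i j => hA (f i) (g j)

theorem IsBohemian.fromRows {m₁ m₂ : Type*} {A₁ : Matrix m₁ n ℤ} {A₂ : Matrix m₂ n ℤ}
    (h₁ : IsBohemian A₁) (h₂ : IsBohemian A₂) : IsBohemian (fromRows A₁ A₂) := by
  rintro (i | i) j
  exacts [h₁ i j, h₂ i j]

theorem IsBohemian.fromCols {n₁ n₂ : Type*} {A₁ : Matrix m n₁ ℤ} {A₂ : Matrix m n₂ ℤ}
    (h₁ : IsBohemian A₁) (h₂ : IsBohemian A₂) : IsBohemian (fromCols A₁ A₂) := by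
  rintro i (j | j)
  exacts [h₁ i j, h₂ i j]

theorem IsBohemian.fromBlocks {m₁ m₂ n₁ n₂ : Type*} {A : Matrix m₁ n₁ ℤ} {B : Matrix m₁ n₂ ℤ}
    {C : Matrix m₂ n₁ ℤ} {D : Matrix m₂ n₂ ℤ} (hA : IsBohemian A) (hB : IsBohemian B)
    (hC : IsBohemian C) (hD : IsBohemian D) : IsBohemian (fromBlocks A B C D) := by
  rintro (i | i) (j | j)
  exacts [hA i j, hB i j, hC i j, hD i j]

theorem IsBohemian.mul_of_unique [Fintype l] [Unique l] {A : Matrix m l ℤ} {B : Matrix l n ℤ}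
    (hA : IsBohemian A) (hB : IsBohemian B) : IsBohemian (A * B) := by
  intro i j
  rw [mul_apply, Fintype.sum_unique]
  rcases hA i default with h | h | h <;> rcases hB default j with h' | h' | h' <;> simp_all

variable [Fintype m] {K : Matrix m m ℤ} {X : Matrix (Fin 1) m ℤ} {Y : Matrix m (Fin 1) ℤ}

theorem isBohemian_glueInv (hKYXK : IsBohemian (rankOneUpdate K X Y))
    (hKY : IsBohemian (K * Y)) (hXK : IsBohemian (X * K)) : IsBohemian (glueInv K X Y) :=
  (hKYXK.fromBlocks hKY hXK.neg isBohemian_one.neg).fromBlocks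
    (isBohemian_zero.fromRows hXK) ((hKY.mul_of_unique hXK).neg.fromCols hKY.neg) hKYXK

theorem isBohemian_rankOneUpdate_glueInv (hKYXK : IsBohemian (rankOneUpdate K X Y))
    (hKY : IsBohemian (K * Y)) (hXK : IsBohemian (X * K)) (hXKY : X * K * Y = -1) :
    IsBohemian (rankOneUpdate (glueInv K X Y) (glueX X) (glueY Y)) := by
  rw [rankOneUpdate_glueInv hXKY]
  exact (hKYXK.fromBlocks hKY isBohemian_zero isBohemian_zero).fromBlocks
    (isBohemian_zero.fromRows hXK) isBohemian_zero hKYXK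

end Bohemian

def mandEquiv (k : ℕ) : (Fin (dm k) ⊕ Fin 1) ⊕ Fin (dm k) ≃ Fin (dm (k + 1)) :=
  ((Equiv.sumCongr finSumFinEquiv (Equiv.refl (Fin (dm k)))).trans finSumFinEquiv).trans
    (finCongr (by simp [dm]; omega))

theorem mand_succ (k : ℕ) :
    mand (k + 1) = reindex (mandEquiv k) (mandEquiv k) (glue (mand k) (mandX k) (mandY k)) :=
  rfl

@[simp]
theorem mandEquiv_inl_inl {k : ℕ} (a : Fin (dm k)) :
    (mandEquiv k (.inl (.inl a)) : ℕ) = a := by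
  simp [mandEquiv]

@[simp]
theorem mandEquiv_inl_inr {k : ℕ} (b : Fin 1) : (mandEquiv k (.inl (.inr b)) : ℕ) = dm k := by
  simp [mandEquiv]

@[simp]
theorem mandEquiv_inr {k : ℕ} (c : Fin (dm k)) :
    (mandEquiv k (.inr c) : ℕ) = dm k + 1 + c := by
  simp [mandEquiv]

theorem mandY_succ (k : ℕ) :
    mandY (k + 1) = reindex (mandEquiv k) (Equiv.refl _) (glueY (mandY k)) := by
  ext i j
  obtain ⟨(a | b) | c, rfl⟩ := (mandEquiv k).surjective i
  · simp [mandY, glueY]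
  · simp [mandY, glueY, (dm_pos k).ne']
  · simp [mandY, glueY]

theorem mandX_succ (k : ℕ) :
    mandX (k + 1) = reindex (Equiv.refl _) (mandEquiv k) (glueX (mandX k)) := by
  have hd : dm (k + 1) - 1 = 2 * dm k := by simp [dm]
  ext i j
  obtain ⟨(a | b) | c, rfl⟩ := (mandEquiv k).surjective j
  · have := a.isLt
    simp [mandX, glueX, hd]
    omega
  · have := dm_pos k
    simp [mandX, glueX, hd]
    omega
  · have hc : dm k + 1 + (c : ℕ) = 2 * dm k ↔ (c : ℕ) = dm k - 1 := by omega
    simp [mandX, glueX, hd, hc]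

theorem mandX_mul_apply {k : ℕ} {n : Type*} (A : Matrix (Fin (dm k)) n ℤ) (x : Fin 1) (j : n) :
    (mandX k * A) x j = A ⟨dm k - 1, Nat.sub_lt (dm_pos k) Nat.one_pos⟩ j := by
  rw [mul_apply, Finset.sum_eq_single ⟨dm k - 1, Nat.sub_lt (dm_pos k) Nat.one_pos⟩]
  · simp [mandX]
  · intro b _ hb
    simp [mandX, Fin.ext_iff.not.mp hb]
  · simp

theorem mul_mandY_apply {k : ℕ} {m : Type*} (A : Matrix m (Fin (dm k)) ℤ) (i : m) (y : Fin 1) :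
    (A * mandY k) i y = A i ⟨0, dm_pos k⟩ := by
  rw [mul_apply, Finset.sum_eq_single ⟨0, dm_pos k⟩]
  · simp [mandY]
  · intro b _ hb
    simp [mandY, Fin.ext_iff.not.mp hb]
  · simp

theorem IsBohemian.mandX_mul {k : ℕ} {n : Type*} {A : Matrix (Fin (dm k)) n ℤ}
    (hA : IsBohemian A) : IsBohemian (mandX k * A) :=
  fun x j => by rw [mandX_mul_apply]; exact hA _ _

theorem IsBohemian.mul_mandY {k : ℕ} {m : Type*} {A : Matrix m (Fin (dm k)) ℤ}
    (hA : IsBohemian A) : IsBohemian (A * mandY k) :=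
  fun i y => by rw [mul_mandY_apply]; exact hA _ _

def mandInv : (k : ℕ) → Matrix (Fin (dm k)) (Fin (dm k)) ℤ
  | 0 => -1
  | k + 1 => reindex (mandEquiv k) (mandEquiv k) (glueInv (mandInv k) (mandX k) (mandY k))

theorem mandX_mul_mandInv_mul_mandY (k : ℕ) : mandX k * mandInv k * mandY k = -1 := by
  induction k with
  | zero => decide
  | succ k ih =>
    rw [mandX_succ, mandY_succ, mandInv, reindex_apply, reindex_apply, reindex_apply,
      submatrix_mul_equiv, submatrix_mul_equiv, glueX_mul_glueInv_mul_glueY ih]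
    simp

theorem mand_mul_mandInv (k : ℕ) : mand k * mandInv k = 1 := by
  induction k with
  | zero => decide
  | succ k ih =>
    rw [mand_succ, mandInv, reindex_apply, reindex_apply, submatrix_mul_equiv,
      glue_mul_glueInv ih (mandX_mul_mandInv_mul_mandY k), submatrix_one_equiv]

theorem isBohemian_mandInv (k : ℕ) :
    IsBohemian (mandInv k) ∧ IsBohemian (rankOneUpdate (mandInv k) (mandX k) (mandY k)) := by
  induction k with
  | zero =>
    have h : rankOneUpdate (mandInv 0) (mandX 0) (mandY 0) = 0 := by decide
    exact ⟨isBohemian_one.neg, h ▸ isBohemian_zero⟩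
  | succ k ih =>
    obtain ⟨hK, hKYXK⟩ := ih
    constructor
    · rw [mandInv, reindex_apply]
      exact (isBohemian_glueInv hKYXK hK.mul_mandY hK.mandX_mul).submatrix _ _
    · rw [mandInv, mandX_succ, mandY_succ, rankOneUpdate_reindex, reindex_apply]
      exact (isBohemian_rankOneUpdate_glueInv hKYXK hK.mul_mandY hK.mandX_mul
        (mandX_mul_mandInv_mul_mandY k)).submatrix _ _

/-- Mandelbrot matrices have the rhapsody property:  they are invertible, the inverse is
Bohemian with entries in `{-1, 0, 1}`, and the bottom-left entry of the inverse is `-1`. -/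
theorem mandelbrot_rhapsody (k : ℕ) :
    IsUnit (mand k).det ∧
    (∀ i j, (mand k)⁻¹ i j ∈ ({-1, 0, 1} : Set ℤ)) ∧
    (mand k)⁻¹ ⟨dm k - 1, Nat.sub_lt (dm_pos k) Nat.one_pos⟩ ⟨0, dm_pos k⟩ = -1 := by
  have hinv : (mand k)⁻¹ = mandInv k := inv_eq_right_inv (mand_mul_mandInv k)
  refine ⟨isUnit_det_of_right_inverse (mand_mul_mandInv k), hinv ▸ (isBohemian_mandInv k).1, ?_⟩
  have h := congr_fun₂ (mandX_mul_mandInv_mul_mandY k) 0 0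
  rw [mul_mandY_apply, mandX_mul_apply] at h
  simpa [hinv] using h
end
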